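/- If f : ℝⁿ → ℂ is continuous and positive definite (not necessarily non-negative), then |f|^{2k} is a non-negative positive definite function for every k ∈ ℕ; consequently |V|⁻¹ ∫_V |f|^{2k} ≤ C_n(U,V) · |U|⁻¹ ∫_U |f|^{2k}. -/

import Mathlib

/-!
Positive definiteness of `f` means that the kernel matrix `(f (x - y))_{x,y}` is positive
semidefinite, so by the Schur product theorem the class is closed under products; since
`conj ∘ f` is positive definite as well, so is `|f|^{2k} = (f · conj f)^k`.

For the inequality it suffices to bound `∫_V g ≤ C ∫_U g` for all continuous, non-negative,
positive definite `g` with `C` independent of `g`: this bounds the set of ratios defining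
`C_n(U,V)` from above. Averaging the finite inequalities
`∑_{i,j} (2 g(x_i - x_j) - g(x_i - x_j + v) - g(x_i - x_j - v)) ≥ 0` over `m` independent
uniform points `x_i` of a ball `B` and letting `m → ∞` gives
`∫∫_{B×B} g(x - y + v) ≤ 2 ∫∫_{B×B} g(x - y)`. The left side dominates a multiple of the integral
of `g` over a small ball around `v` and the right side is at most a multiple of the integral over
a ball around `0` contained in `U`; covering the compact set `V` by finitely many small balls
finishes the proof.
-/

open MeasureTheory Complex Pointwise

noncomputable section

/-- A continuous-type positive definiteness condition for complex-valued
functions on `ℝⁿ`: all finite quadratic forms are real and nonnegative. -/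
def IsPosDefC {n : ℕ} (f : (Fin n → ℝ) → ℂ) : Prop :=
  ∀ (X : Finset (Fin n → ℝ)) (c : (Fin n → ℝ) → ℂ),
    0 ≤ (∑ a ∈ X, ∑ b ∈ X, c a * (starRingEnd ℂ) (c b) * f (a - b)).re ∧
    (∑ a ∈ X, ∑ b ∈ X, c a * (starRingEnd ℂ) (c b) * f (a - b)).im = 0

/-- Positive definiteness for real-valued functions on `ℝⁿ`. -/
def IsPosDefR {n : ℕ} (f : (Fin n → ℝ) → ℝ) : Prop :=
  IsPosDefC (fun x => (f x : ℂ))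

/-- The set of ratios `(|V|⁻¹ ∫_V f) / (|U|⁻¹ ∫_U f)` over nonzero continuous
non-negative positive definite `f`. -/
def ratioSet (n : ℕ) (U V : Set (Fin n → ℝ)) : Set ℝ :=
  { c | ∃ f : (Fin n → ℝ) → ℝ, Continuous f ∧ (∀ x, 0 ≤ f x) ∧ IsPosDefR f ∧
      f ≠ 0 ∧ 0 < ∫ x in U, f x ∧
      c = ((volume V).toReal⁻¹ * ∫ x in V, f x) /
          ((volume U).toReal⁻¹ * ∫ x in U, f x) }

/-- The sharp constant `C_n(U,V)` in the doubling-type condition at the origin. -/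
def doublingConst (n : ℕ) (U V : Set (Fin n → ℝ)) : ℝ := sSup (ratioSet n U V)

/-- A `0`-symmetric convex body in `ℝⁿ`. -/
def IsSymConvexBody {n : ℕ} (U : Set (Fin n → ℝ)) : Prop :=
  Convex ℝ U ∧ IsCompact U ∧ (interior U).Nonempty ∧ U = -U

open Metric Topology ProbabilityTheory
open scoped ComplexOrder

section PositiveDefinite

variable {n : ℕ}

def diffKernel (f : (Fin n → ℝ) → ℂ) : Matrix (Fin n → ℝ) (Fin n → ℝ) ℂ :=
  Matrix.of fun x y => f (x - y)

theorem isPosDefC_iff_nonneg {f : (Fin n → ℝ) → ℂ} : IsPosDefC f ↔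
    ∀ (X : Finset (Fin n → ℝ)) (c : (Fin n → ℝ) → ℂ),
      0 ≤ ∑ a ∈ X, ∑ b ∈ X, c a * starRingEnd ℂ (c b) * f (a - b) := by
  simp only [IsPosDefC, Complex.nonneg_iff, eq_comm (a := (0 : ℝ))]

theorem IsPosDefC.apply_neg {f : (Fin n → ℝ) → ℂ} (hf : IsPosDefC f) (x : Fin n → ℝ) :
    f (-x) = starRingEnd ℂ (f x) := by
  have h0 := (hf {0} fun _ => 1).2
  simp only [Finset.sum_singleton, sub_zero, map_one, one_mul] at h0
  by_cases hx : x = 0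
  · subst hx
    rw [neg_zero, eq_comm, Complex.conj_eq_iff_im, h0]
  have hx' : x ∉ ({0} : Finset (Fin n → ℝ)) := by simpa using hx
  have h1 := (hf {x, 0} fun _ => 1).2
  have h2 := (hf {x, 0} fun a => if a = x then I else 1).2
  simp only [Finset.sum_insert hx', Finset.sum_singleton, sub_self, sub_zero, zero_sub,
    if_pos, if_neg (Ne.symm hx), map_one, one_mul, mul_one, conj_I, add_im, mul_im, mul_re,
    I_re, I_im, neg_re, neg_im] at h1 h2
  apply Complex.ext <;> simp only [conj_re, conj_im] <;> linarith

theorem isPosDefC_iff_posSemidef {f : (Fin n → ℝ) → ℂ} :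
    IsPosDefC f ↔ (diffKernel f).PosSemidef := by
  constructor
  · intro hf
    refine ⟨?_, fun x => ?_⟩
    · ext x y
      rw [Matrix.conjTranspose_apply, diffKernel, Matrix.of_apply, Matrix.of_apply, ← neg_sub,
        hf.apply_neg, Complex.star_def, Complex.conj_conj]
    · convert isPosDefC_iff_nonneg.1 hf x.support (fun a => starRingEnd ℂ (x a)) using 1
      simp [Finsupp.sum, diffKernel, mul_right_comm]
  · intro h
    refine isPosDefC_iff_nonneg.2 fun X c => ?_
    classical
    convert h.2 (Finsupp.onFinset X (fun a => if a ∈ X then starRingEnd ℂ (c a) else 0)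
      fun a ha => by by_contra h'; exact ha (if_neg h')) using 1
    rw [Finsupp.onFinset_sum _ (by simp)]
    refine Finset.sum_congr rfl fun a ha => ?_
    rw [Finsupp.onFinset_sum _ (by simp)]
    simp [ha, diffKernel, mul_right_comm]

theorem IsPosDefC.mul {f g : (Fin n → ℝ) → ℂ} (hf : IsPosDefC f) (hg : IsPosDefC g) :
    IsPosDefC fun x => f x * g x :=
  isPosDefC_iff_posSemidef.2 <|
    (isPosDefC_iff_posSemidef.1 hf).hadamard (isPosDefC_iff_posSemidef.1 hg)

theorem IsPosDefC.conj {f : (Fin n → ℝ) → ℂ} (hf : IsPosDefC f) :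
    IsPosDefC fun x => starRingEnd ℂ (f x) := by
  have h : diffKernel (fun x => starRingEnd ℂ (f x)) = (diffKernel f).transpose := by
    ext x y
    simp only [diffKernel, Matrix.transpose_apply, Matrix.of_apply, ← hf.apply_neg, neg_sub]
  rw [isPosDefC_iff_posSemidef, h]
  exact (isPosDefC_iff_posSemidef.1 hf).transpose

theorem isPosDefC_one : IsPosDefC fun _ : Fin n → ℝ => (1 : ℂ) := by
  refine isPosDefC_iff_nonneg.2 fun X c => ?_
  have h : ∑ a ∈ X, ∑ b ∈ X, c a * starRingEnd ℂ (c b) * 1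
      = (∑ a ∈ X, c a) * starRingEnd ℂ (∑ b ∈ X, c b) := by
    simp [map_sum, Finset.sum_mul_sum]
  rw [h, mul_conj]
  exact zero_le_real.2 (normSq_nonneg _)

theorem IsPosDefC.pow {f : (Fin n → ℝ) → ℂ} (hf : IsPosDefC f) (k : ℕ) :
    IsPosDefC fun x => f x ^ k := by
  induction k with
  | zero => simpa using isPosDefC_one
  | succ k ih => simpa [pow_succ] using ih.mul hf

theorem IsPosDefC.norm_pow_two_mul {f : (Fin n → ℝ) → ℂ} (hf : IsPosDefC f) (k : ℕ) :
    IsPosDefR fun x => ‖f x‖ ^ (2 * k) := by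
  simpa [IsPosDefR, mul_conj', pow_mul] using (hf.mul hf.conj).pow k

namespace IsPosDefR

variable {g : (Fin n → ℝ) → ℝ}

theorem sum_sum_nonneg (hg : IsPosDefR g) {ι : Type*} [Fintype ι] (e : ι → Fin n → ℝ)
    (c : ι → ℝ) : 0 ≤ ∑ i, ∑ j, c i * c j * g (e i - e j) := by
  have h := ((isPosDefC_iff_posSemidef.1 hg).submatrix e).dotProduct_mulVec_nonneg
    fun i => (c i : ℂ)
  have hsum : dotProduct (star fun i => (c i : ℂ))
      (((diffKernel fun x => (g x : ℂ)).submatrix e e).mulVec fun i => (c i : ℂ))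
      = ((∑ i, ∑ j, c i * c j * g (e i - e j) : ℝ) : ℂ) := by
    simp [dotProduct, Matrix.mulVec, diffKernel, Finset.mul_sum, mul_comm, mul_assoc]
  rwa [hsum, zero_le_real] at h

theorem apply_neg (hg : IsPosDefR g) (x : Fin n → ℝ) : g (-x) = g x := by
  exact_mod_cast (IsPosDefC.apply_neg hg x).trans (conj_ofReal _)

theorem apply_le_apply_zero (hg : IsPosDefR g) (x : Fin n → ℝ) : g x ≤ g 0 := by
  have h := hg.sum_sum_nonneg (fun b : Bool => if b then x else 0) fun b => if b then 1 else -1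
  simp only [Fintype.sum_bool, if_true, if_false, Bool.false_eq_true, sub_self, sub_zero,
    zero_sub, hg.apply_neg] at h
  linarith

theorem abs_apply_le (hg : IsPosDefR g) (hg0 : ∀ x, 0 ≤ g x) (x : Fin n → ℝ) : |g x| ≤ g 0 :=
  abs_le.2 ⟨by linarith [hg0 x, hg0 0], hg.apply_le_apply_zero x⟩

/-- The quadratic form of `g` at the points `x i + v` and `x i` with weights `1` and `-1`. -/
theorem sum_sum_shift_nonneg (hg : IsPosDefR g) {ι : Type*} [Fintype ι] (x : ι → Fin n → ℝ)
    (v : Fin n → ℝ) :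
    0 ≤ ∑ i, ∑ j, (2 * g (x i - x j) - g (x i - x j + v) - g (x i - x j - v)) := by
  have h := hg.sum_sum_nonneg (Sum.elim (fun i => x i + v) x) (Sum.elim 1 (-1))
  simp only [Fintype.sum_sum_type, Sum.elim_inl, Sum.elim_inr, Pi.one_apply, Pi.neg_apply,
    add_sub_add_right_eq_sub] at h
  simp only [add_sub_right_comm, sub_add_eq_sub_sub] at h
  simp only [Finset.sum_sub_distrib, Finset.sum_add_distrib, ← Finset.mul_sum] at h ⊢
  linarith

end IsPosDefR

end PositiveDefinite

section Averaging

variable {α : Type*} [MeasurableSpace α]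

theorem map_pi_pair_eq_prod (μ : Measure α) [IsProbabilityMeasure μ] {ι : Type*} [Fintype ι]
    {i j : ι} (hij : i ≠ j) :
    (Measure.pi fun _ : ι => μ).map (fun x => (x i, x j)) = μ.prod μ := by
  have hind : IndepFun (fun x : ι → α => x i) (fun x => x j) (Measure.pi fun _ => μ) :=
    (iIndepFun_pi (X := fun _ => id) fun _ => aemeasurable_id).indepFun hij
  rw [(indepFun_iff_map_prod_eq_prod_map_map (measurable_pi_apply i).aemeasurable
    (measurable_pi_apply j).aemeasurable).1 hind, (measurePreserving_eval _ i).map_eq,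
    (measurePreserving_eval _ j).map_eq]

variable {Φ : α × α → ℝ}

theorem integral_sum_sum_pi (μ : Measure α) [IsProbabilityMeasure μ] (hΦ : Measurable Φ)
    {C : ℝ} (hC : ∀ p, |Φ p| ≤ C) (m : ℕ) :
    ∫ x, ∑ i, ∑ j, Φ (x i, x j) ∂(Measure.pi fun _ : Fin (m + 1) => μ)
      = (m + 1) * (∫ a, Φ (a, a) ∂μ + m * ∫ p, Φ p ∂(μ.prod μ)) := by
  have hint : ∀ i j : Fin (m + 1), Integrable (fun x => Φ (x i, x j)) (Measure.pi fun _ => μ) :=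
    fun i j => Integrable.of_bound
      (hΦ.comp ((measurable_pi_apply i).prodMk (measurable_pi_apply j))).aestronglyMeasurable
      C (.of_forall fun x => (Real.norm_eq_abs _).trans_le (hC _))
  have hentry : ∀ i j : Fin (m + 1), ∫ x, Φ (x i, x j) ∂(Measure.pi fun _ => μ)
      = if i = j then ∫ a, Φ (a, a) ∂μ else ∫ p, Φ p ∂(μ.prod μ) := by
    intro i j
    split_ifs with hij
    · subst hij
      conv_rhs => rw [← (measurePreserving_eval (fun _ => μ) i).map_eq]
      rw [integral_map (measurable_pi_apply i).aemeasurable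
        (hΦ.comp (measurable_id.prodMk measurable_id)).aestronglyMeasurable]
    · rw [← map_pi_pair_eq_prod μ hij, integral_map
        ((measurable_pi_apply i).prodMk (measurable_pi_apply j)).aemeasurable
        hΦ.aestronglyMeasurable]
  rw [integral_finsetSum _ fun i _ => integrable_finsetSum _ fun j _ => hint i j]
  simp_rw [integral_finsetSum _ fun j _ => hint _ j, hentry]
  simp [Finset.sum_ite, Finset.filter_ne, Finset.filter_eq, mul_add]

theorem nonneg_of_forall_nat_add_mul_nonneg {D I : ℝ} (h : ∀ m : ℕ, 0 ≤ D + m * I) : 0 ≤ I := by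
  by_contra! hI
  obtain ⟨m, hm⟩ := exists_nat_gt (D / -I)
  have := h m
  rw [div_lt_iff₀ (neg_pos.2 hI)] at hm
  linarith

theorem integral_prod_nonneg_of_sum_sum_nonneg (μ : Measure α) [IsFiniteMeasure μ]
    (hΦ : Measurable Φ) {C : ℝ} (hC : ∀ p, |Φ p| ≤ C)
    (hsum : ∀ (m : ℕ) (x : Fin m → α), 0 ≤ ∑ i, ∑ j, Φ (x i, x j)) :
    0 ≤ ∫ p, Φ p ∂(μ.prod μ) := by
  rcases eq_zero_or_neZero μ with rfl | _
  · simp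
  set c := (μ Set.univ)⁻¹
  have hc : 0 < c.toReal := ENNReal.toReal_pos (ENNReal.inv_ne_zero.2 (measure_ne_top _ _))
    (ENNReal.inv_ne_top.2 (NeZero.ne _))
  have hsample : ∀ m : ℕ, 0 ≤ ∫ a, Φ (a, a) ∂(c • μ) + m * ∫ p, Φ p ∂((c • μ).prod (c • μ)) := by
    intro m
    have h := integral_nonneg (μ := Measure.pi fun _ : Fin (m + 1) => c • μ)
      (f := fun x => ∑ i, ∑ j, Φ (x i, x j)) fun x => hsum _ x
    rw [integral_sum_sum_pi (c • μ) hΦ hC m] at h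
    exact (mul_nonneg_iff_of_pos_left (by positivity)).1 h
  have h := nonneg_of_forall_nat_add_mul_nonneg hsample
  rw [Measure.prod_smul_left, Measure.prod_smul_right, integral_smul_measure,
    integral_smul_measure, smul_eq_mul, smul_eq_mul] at h
  exact (mul_nonneg_iff_of_pos_left hc).1 ((mul_nonneg_iff_of_pos_left hc).1 h)

end Averaging

section Haar

variable {E : Type*} [NormedAddCommGroup E] [MeasurableSpace E] [BorelSpace E]

theorem setIntegral_ball_comp_add_right (μ : Measure E) [μ.IsAddRightInvariant] (g : E → ℝ)
    (a c : E) (s : ℝ) :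
    ∫ x in ball a s, g (x + c) ∂μ = ∫ z in ball (a + c) s, g z ∂μ := by
  simpa using (measurePreserving_add_right μ c).setIntegral_preimage_emb
    (measurableEmbedding_addRight c) g (ball (a + c) s)

theorem setIntegral_ball_comp_sub_add (μ : Measure E) [μ.IsAddRightInvariant] (g : E → ℝ)
    (r : ℝ) (y w : E) :
    ∫ x in ball 0 r, g (x - y + w) ∂μ = ∫ z in ball (w - y) r, g z ∂μ := by
  simpa [sub_add_eq_add_sub, add_sub_assoc, ← sub_eq_neg_add] using
    setIntegral_ball_comp_add_right μ g 0 (w - y) r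

variable [ProperSpace E] {g : E → ℝ} {C : ℝ}

theorem integrable_comp_sub_add (hgc : Continuous g) (hgC : ∀ x, |g x| ≤ C)
    (ν : Measure (E × E)) [IsFiniteMeasure ν] (w : E) :
    Integrable (fun p : E × E => g (p.1 - p.2 + w)) ν :=
  Integrable.of_bound
    (by fun_prop : Continuous fun p : E × E => g (p.1 - p.2 + w)).aestronglyMeasurable
    C (.of_forall fun p => (Real.norm_eq_abs _).trans_le (hgC _))

instance {μ : Measure E} [IsFiniteMeasureOnCompacts μ] (a : E) (r : ℝ) :
    IsFiniteMeasure (μ.restrict (ball a r)) :=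
  isFiniteMeasure_restrict.2 measure_ball_lt_top.ne

theorem Continuous.integrableOn_ball (μ : Measure E) [IsFiniteMeasureOnCompacts μ]
    (hgc : Continuous g) (a : E) (r : ℝ) : IntegrableOn g (ball a r) μ :=
  (hgc.continuousOn.integrableOn_compact (isCompact_closedBall a r)).mono_set
    ball_subset_closedBall

variable (μ : Measure E) [μ.IsAddRightInvariant] [IsFiniteMeasureOnCompacts μ]

def ballAutocorr (g : E → ℝ) (r : ℝ) (w : E) : ℝ :=
  ∫ p, g (p.1 - p.2 + w) ∂((μ.restrict (ball 0 r)).prod (μ.restrict (ball 0 r)))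

theorem ballAutocorr_eq (hgc : Continuous g) (hgC : ∀ x, |g x| ≤ C) (r : ℝ) (w : E) :
    ballAutocorr μ g r w = ∫ y in ball 0 r, ∫ z in ball (w - y) r, g z ∂μ ∂μ := by
  rw [ballAutocorr, integral_prod_symm _ (integrable_comp_sub_add hgc hgC _ w)]
  simp only [setIntegral_ball_comp_sub_add]

theorem integrableOn_setIntegral_ball_sub (hgc : Continuous g) (hgC : ∀ x, |g x| ≤ C) (r : ℝ)
    (w : E) : IntegrableOn (fun y => ∫ z in ball (w - y) r, g z ∂μ) (ball 0 r) μ := by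
  simpa only [IntegrableOn, setIntegral_ball_comp_sub_add] using
    (integrable_comp_sub_add hgc hgC ((μ.restrict (ball 0 r)).prod (μ.restrict (ball 0 r))) w
      ).integral_prod_right

theorem ballAutocorr_le (hgc : Continuous g) (hg0 : ∀ x, 0 ≤ g x) (hgC : ∀ x, |g x| ≤ C) (r : ℝ)
    (w : E) :
    ballAutocorr μ g r w ≤ μ.real (ball 0 r) * ∫ z in ball w (2 * r), g z ∂μ := by
  rw [ballAutocorr_eq μ hgc hgC, ← smul_eq_mul, ← setIntegral_const]
  refine integral_mono_of_nonneg (.of_forall fun y => setIntegral_nonneg measurableSet_ball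
    fun z _ => hg0 z) (integrable_const _) (ae_restrict_of_forall_mem measurableSet_ball
    fun y hy => setIntegral_mono_set (hgc.integrableOn_ball μ w (2 * r))
      (.of_forall fun z => hg0 z) (ball_subset_ball' ?_).eventuallyLE)
  rw [mem_ball_zero_iff] at hy
  simp only [dist_self_sub_left]
  linarith

theorem le_ballAutocorr (hgc : Continuous g) (hg0 : ∀ x, 0 ≤ g x) (hgC : ∀ x, |g x| ≤ C) {r : ℝ}
    (hr : 0 ≤ r) (w : E) :
    (∫ z in ball w (r / 2), g z ∂μ) * μ.real (ball 0 (r / 2)) ≤ ballAutocorr μ g r w := by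
  have hint := integrableOn_setIntegral_ball_sub μ hgc hgC r w
  rw [ballAutocorr_eq μ hgc hgC]
  calc (∫ z in ball w (r / 2), g z ∂μ) * μ.real (ball 0 (r / 2))
      ≤ ∫ y in ball 0 (r / 2), ∫ z in ball (w - y) r, g z ∂μ ∂μ := by
        refine setIntegral_ge_of_const_le_real measurableSet_ball measure_ball_lt_top.ne
          (fun y hy => setIntegral_mono_set (hgc.integrableOn_ball μ _ r)
            (.of_forall fun z => hg0 z) (ball_subset_ball' ?_).eventuallyLE)
          (hint.mono_set (ball_subset_ball (by linarith)))
        rw [mem_ball_zero_iff] at hy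
        simp only [dist_self_sub_right]
        linarith
    _ ≤ ∫ y in ball 0 r, ∫ z in ball (w - y) r, g z ∂μ ∂μ :=
        setIntegral_mono_set hint (.of_forall fun y => setIntegral_nonneg measurableSet_ball
          fun z _ => hg0 z) (ball_subset_ball (by linarith)).eventuallyLE

end Haar

theorem setIntegral_biUnion_le {α ι : Type*} [MeasurableSpace α] {μ : Measure α} {f : α → ℝ}
    (hf0 : ∀ x, 0 ≤ f x) (t : Finset ι) {s : ι → Set α} (hfi : ∀ i ∈ t, IntegrableOn f (s i) μ) :
    ∫ x in ⋃ i ∈ t, s i, f x ∂μ ≤ ∑ i ∈ t, ∫ x in s i, f x ∂μ := by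
  classical
  induction t using Finset.induction_on with
  | empty => simp
  | insert a t ha ih =>
    rw [Finset.set_biUnion_insert, Finset.sum_insert ha]
    have hta : IntegrableOn f (⋃ i ∈ t, s i) μ :=
      integrableOn_finset_iUnion.2 fun i hi => hfi i (Finset.mem_insert_of_mem hi)
    have hsa := hfi a (Finset.mem_insert_self a t)
    calc ∫ x in s a ∪ ⋃ i ∈ t, s i, f x ∂μ
        ≤ ∫ x, f x ∂(μ.restrict (s a) + μ.restrict (⋃ i ∈ t, s i)) :=
          integral_mono_measure (Measure.restrict_union_le _ _) (.of_forall hf0)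
            (Integrable.add_measure hsa hta)
      _ ≤ _ := by
          rw [integral_add_measure hsa hta]
          exact add_le_add le_rfl (ih fun i hi => hfi i (Finset.mem_insert_of_mem hi))

theorem IsSymConvexBody.mem_nhds_zero {n : ℕ} {U : Set (Fin n → ℝ)} (hU : IsSymConvexBody U) :
    U ∈ 𝓝 0 := by
  obtain ⟨hconv, -, ⟨z, hz⟩, hsymm⟩ := hU
  have hz' : -z ∈ interior U := by
    rw [hsymm]
    change -z ∈ interior (Homeomorph.neg (Fin n → ℝ) ⁻¹' U)
    rw [← Homeomorph.preimage_interior]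
    simpa using hz
  have h0 := hconv.interior hz hz' (by norm_num : (0 : ℝ) ≤ 1 / 2)
    (by norm_num : (0 : ℝ) ≤ 1 / 2) (by norm_num)
  rw [smul_neg, add_neg_cancel] at h0
  exact mem_interior_iff_mem_nhds.1 h0

theorem IsSymConvexBody.measureReal_pos {n : ℕ} {U : Set (Fin n → ℝ)} (hU : IsSymConvexBody U) :
    0 < volume.real U :=
  ENNReal.toReal_pos ((isOpen_interior.measure_pos volume hU.2.2.1).trans_le
    (measure_mono interior_subset)).ne' hU.2.1.measure_lt_top.ne

section Doubling

variable {n : ℕ} {g : (Fin n → ℝ) → ℝ}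

theorem IsPosDefR.ballAutocorr_add_le (hg : IsPosDefR g) (hgc : Continuous g)
    (hg0 : ∀ x, 0 ≤ g x) (r : ℝ) (v : Fin n → ℝ) :
    ballAutocorr volume g r v + ballAutocorr volume g r (-v) ≤ 2 * ballAutocorr volume g r 0 := by
  set ρ := (volume : Measure (Fin n → ℝ)).restrict (ball 0 r)
  have hint := integrable_comp_sub_add hgc (hg.abs_apply_le hg0) (ρ.prod ρ)
  have h := integral_prod_nonneg_of_sum_sum_nonneg ρ
    (Φ := fun p => 2 * g (p.1 - p.2 + 0) - g (p.1 - p.2 + v) - g (p.1 - p.2 + -v))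
    (by fun_prop) (C := 2 * g 0) (fun p => abs_le.2 ⟨?_, ?_⟩) fun m x => by
      simpa only [add_zero, ← sub_eq_add_neg] using hg.sum_sum_shift_nonneg x v
  · have h2 : Integrable (fun p : (Fin n → ℝ) × (Fin n → ℝ) => 2 * g (p.1 - p.2 + 0)) (ρ.prod ρ) :=
      (hint 0).const_mul 2
    rw [integral_sub (h2.sub (hint v) : Integrable (fun p => 2 * g (p.1 - p.2 + 0) -
      g (p.1 - p.2 + v)) _) (hint (-v)), integral_sub h2 (hint v), integral_const_mul] at h
    unfold ballAutocorr
    linarith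
  · linarith [hg.apply_le_apply_zero (p.1 - p.2 + v), hg.apply_le_apply_zero (p.1 - p.2 + -v),
      hg0 (p.1 - p.2 + 0)]
  · linarith [hg.apply_le_apply_zero (p.1 - p.2 + 0), hg0 (p.1 - p.2 + v), hg0 (p.1 - p.2 + -v)]

theorem IsPosDefR.integral_ball_le (hg : IsPosDefR g) (hgc : Continuous g) (hg0 : ∀ x, 0 ≤ g x)
    {r : ℝ} (hr : 0 < r) (v : Fin n → ℝ) :
    ∫ z in ball v (r / 2), g z ≤
      2 * volume.real (ball (0 : Fin n → ℝ) r) / volume.real (ball (0 : Fin n → ℝ) (r / 2)) *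
        ∫ z in ball 0 (2 * r), g z := by
  have hgC := hg.abs_apply_le hg0
  have hshift := hg.ballAutocorr_add_le hgc hg0 r v
  have hneg : 0 ≤ ballAutocorr volume g r (-v) := integral_nonneg fun p => hg0 _
  have hlow := le_ballAutocorr volume hgc hg0 hgC hr.le v
  have hup := ballAutocorr_le volume hgc hg0 hgC r 0
  have hhalf : 0 < volume.real (ball (0 : Fin n → ℝ) (r / 2)) :=
    ENNReal.toReal_pos (measure_ball_pos _ _ (by linarith)).ne' measure_ball_lt_top.ne
  rw [div_mul_eq_mul_div, le_div_iff₀ hhalf]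
  linarith

theorem exists_integral_le_mul_integral {U V : Set (Fin n → ℝ)} (hU : U ∈ 𝓝 0)
    (hUc : IsCompact U) (hV : IsCompact V) :
    ∃ C : ℝ, ∀ g : (Fin n → ℝ) → ℝ, Continuous g → (∀ x, 0 ≤ g x) → IsPosDefR g →
      ∫ x in V, g x ≤ C * ∫ x in U, g x := by
  obtain ⟨ρ, hρ, hρU⟩ := Metric.mem_nhds_iff.1 hU
  obtain ⟨t, -, hVt⟩ := hV.elim_nhds_subcover (fun v => ball v (ρ / 4))
    fun v _ => ball_mem_nhds v (by positivity)
  set K := 2 * volume.real (ball (0 : Fin n → ℝ) (ρ / 2)) /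
    volume.real (ball (0 : Fin n → ℝ) (ρ / 4))
  refine ⟨t.card * K, fun g hgc hg0 hg => ?_⟩
  have hball : ∀ v, IntegrableOn g (ball v (ρ / 4)) := fun v => hgc.integrableOn_ball volume v _
  calc ∫ x in V, g x ≤ ∫ x in ⋃ v ∈ t, ball v (ρ / 4), g x :=
        setIntegral_mono_set (integrableOn_finset_iUnion.2 fun v _ => hball v)
          (.of_forall fun x => hg0 x) hVt.eventuallyLE
    _ ≤ ∑ v ∈ t, ∫ x in ball v (ρ / 4), g x :=
        setIntegral_biUnion_le hg0 t fun v _ => hball v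
    _ ≤ ∑ v ∈ t, K * ∫ x in ball 0 ρ, g x := Finset.sum_le_sum fun v _ => by
        have h := hg.integral_ball_le hgc hg0 (half_pos hρ) v
        rwa [mul_div_cancel₀ _ two_ne_zero, div_div, show (2 : ℝ) * 2 = 4 by norm_num] at h
    _ = t.card * K * ∫ x in ball 0 ρ, g x := by rw [Finset.sum_const, nsmul_eq_mul, mul_assoc]
    _ ≤ t.card * K * ∫ x in U, g x :=
        mul_le_mul_of_nonneg_left (setIntegral_mono_set (hgc.continuousOn.integrableOn_compact hUc)
          (.of_forall fun x => hg0 x) hρU.eventuallyLE) (by positivity)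

theorem bddAbove_ratioSet {U V : Set (Fin n → ℝ)} (hU : U ∈ 𝓝 0) (hUc : IsCompact U)
    (hV : IsCompact V) : BddAbove (ratioSet n U V) := by
  obtain ⟨C, hC⟩ := exists_integral_le_mul_integral hU hUc hV
  refine ⟨(volume U).toReal / (volume V).toReal * C, ?_⟩
  rintro _ ⟨g, hgc, hg0, hg, -, hpos, rfl⟩
  rw [mul_div_mul_comm, inv_div_inv]
  exact mul_le_mul_of_nonneg_left ((div_le_iff₀ hpos).2 (hC g hgc hg0 hg)) (by positivity)

end Doubling

/-- If `f : ℝⁿ → ℂ` is continuous positive definite then `|f|^{2k}` is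
non-negative positive definite, and satisfies the doubling inequality. -/
theorem posdef_abs_pow {n : ℕ} (U V : Set (Fin n → ℝ))
    (hU : IsSymConvexBody U) (hV : IsSymConvexBody V)
    (f : (Fin n → ℝ) → ℂ) (hc : Continuous f) (hpd : IsPosDefC f) (k : ℕ) :
    IsPosDefR (fun x => ‖f x‖ ^ (2 * k)) ∧
    (volume V).toReal⁻¹ * ∫ x in V, ‖f x‖ ^ (2 * k) ≤
      doublingConst n U V *
        ((volume U).toReal⁻¹ * ∫ x in U, ‖f x‖ ^ (2 * k)) := by
  have hg := hpd.norm_pow_two_mul k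
  refine ⟨hg, ?_⟩
  have hgc : Continuous fun x => ‖f x‖ ^ (2 * k) := by fun_prop
  have hg0 : ∀ x, 0 ≤ ‖f x‖ ^ (2 * k) := fun x => by positivity
  obtain ⟨C, hC⟩ := exists_integral_le_mul_integral hU.mem_nhds_zero hU.2.1 hV.2.1
  rcases (integral_nonneg hg0 : 0 ≤ ∫ x in U, ‖f x‖ ^ (2 * k)).lt_or_eq with hpos | hzero
  · have hmem : _ ∈ ratioSet n U V :=
      ⟨_, hgc, hg0, hg, fun h => hpos.ne' (by simp [h]), hpos, rfl⟩
    have hden := mul_pos (inv_pos.2 hU.measureReal_pos) hpos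
    exact (div_le_iff₀ hden).1 (le_csSup (bddAbove_ratioSet hU.mem_nhds_zero hU.2.1 hV.2.1) hmem)
  · rw [← hzero, mul_zero, mul_zero]
    exact mul_nonpos_of_nonneg_of_nonpos (by positivity)
      (by simpa [← hzero] using hC _ hgc hg0 hg)
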